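/- arXiv:1410.4354 — 7 statements merged into one kernel-verified Lean document; each statement's English description precedes it below -/
import Mathlib

section
/- Let H and J be real symmetric positive definite (p+q)×(p+q) matrices, each partitioned conformably into blocks H = [[H₁₁, H₁₂],[H₂₁, H₂₂]] and J = [[J₁₁, J₁₂],[J₂₁, J₂₂]], where H₁₁ and J₁₁ are p×p. Then tr(H₁₁⁻¹ J₁₁) < tr(H⁻¹ J). (Monotonicity of the composite likelihood penalty term tr(H⁻¹J) under nesting of models.) -/
/-!
Write `S = H₂₂ - H₂₁ H₁₁⁻¹ H₁₂` for the Schur complement of `H₁₁` and `L = [-H₂₁ H₁₁⁻¹ | 1]`.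
The block inverse formula reads `H⁻¹ = diag(H₁₁⁻¹, 0) + Lᴴ S⁻¹ L`, so
`tr(H⁻¹ J) - tr(H₁₁⁻¹ J₁₁) = tr(S⁻¹ · L J Lᴴ)`. Both factors are positive definite: `S⁻¹` is the
lower right block of `H⁻¹`, and `L` has full row rank. Finally the trace of a product `P Q` of
positive definite matrices is `1ᴴ (P ⊙ Qᵀ) 1`, which is positive by the Schur product theorem.
-/

namespace Matrix

variable {m n α : Type*} [Fintype m] [Fintype n]

theorem trace_fromBlocks [AddCommMonoid α] (A : Matrix m m α) (B : Matrix m n α)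
    (C : Matrix n m α) (D : Matrix n n α) :
    (fromBlocks A B C D).trace = A.trace + D.trace := by
  simp [trace, Fintype.sum_sum_type]

variable [DecidableEq m] [DecidableEq n] [CommRing α]

-- Without the ascriptions `(1 : Matrix n n α)`, `*` gets elaborated through `CStarMatrix`.
theorem inv_fromBlocks_eq_add_schur {A : Matrix m m α} (B : Matrix m n α) (C : Matrix n m α)
    (D : Matrix n n α) (hA : IsUnit A.det) (hS : IsUnit (D - C * A⁻¹ * B).det) :
    (fromBlocks A B C D)⁻¹ = fromBlocks A⁻¹ 0 0 0 +
      fromRows (-(A⁻¹ * B)) (1 : Matrix n n α) * (D - C * A⁻¹ * B)⁻¹ *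
        fromCols (-(C * A⁻¹)) (1 : Matrix n n α) := by
  refine inv_eq_right_inv ?_
  have hR : fromBlocks A B C D * fromRows (-(A⁻¹ * B)) (1 : Matrix n n α) =
      fromRows 0 (D - C * A⁻¹ * B) := by
    simp [fromBlocks_mul_fromRows, ← Matrix.mul_assoc, mul_nonsing_inv _ hA, neg_add_eq_sub]
  simp only [Matrix.mul_add, ← Matrix.mul_assoc]
  rw [hR, fromRows_mul, Matrix.zero_mul, mul_nonsing_inv _ hS, fromRows_mul_fromCols,
    fromBlocks_multiply, fromBlocks_add, ← fromBlocks_one]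
  simp [mul_nonsing_inv _ hA]

theorem trace_inv_fromBlocks_mul {A : Matrix m m α} (B : Matrix m n α) (C : Matrix n m α)
    (D : Matrix n n α) (hA : IsUnit A.det) (hS : IsUnit (D - C * A⁻¹ * B).det)
    (J : Matrix (m ⊕ n) (m ⊕ n) α) :
    ((fromBlocks A B C D)⁻¹ * J).trace = (A⁻¹ * J.toBlocks₁₁).trace +
      ((D - C * A⁻¹ * B)⁻¹ * (fromCols (-(C * A⁻¹)) (1 : Matrix n n α) * J *
        fromRows (-(A⁻¹ * B)) (1 : Matrix n n α))).trace := by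
  rw [inv_fromBlocks_eq_add_schur B C D hA hS, Matrix.add_mul, trace_add]
  congr 1
  · conv_lhs => rw [← fromBlocks_toBlocks J]
    simp [fromBlocks_multiply, trace_fromBlocks]
  · rw [Matrix.mul_assoc, Matrix.mul_assoc, trace_mul_comm]
    simp only [Matrix.mul_assoc]

theorem toBlocks₂₂_inv_fromBlocks {A : Matrix m m α} (B : Matrix m n α) (C : Matrix n m α)
    (D : Matrix n n α) (hA : IsUnit A.det) (hS : IsUnit (D - C * A⁻¹ * B).det) :
    (fromBlocks A B C D)⁻¹.toBlocks₂₂ = (D - C * A⁻¹ * B)⁻¹ := by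
  rw [inv_fromBlocks_eq_add_schur B C D hA hS, fromRows_mul, fromRows_mul_fromCols,
    fromBlocks_add, toBlocks_fromBlocks₂₂]
  simp

end Matrix

namespace Matrix.PosDef

open scoped ComplexOrder

variable {m n 𝕜 : Type*} [Fintype m] [Fintype n] [RCLike 𝕜]

theorem trace_mul_pos [Nonempty n] {P Q : Matrix n n 𝕜} (hP : P.PosDef) (hQ : Q.PosDef) :
    0 < (P * Q).trace := by
  have htrace : (P * Q).trace = star 1 ⬝ᵥ (P ⊙ Qᵀ) *ᵥ 1 := by
    simp [trace, mul_apply, dotProduct, mulVec]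
  rw [htrace]
  exact (hP.hadamard hQ.transpose).dotProduct_mulVec_pos one_ne_zero

variable [DecidableEq n]

theorem fromCols_one_mul_mul_conjTranspose {J : Matrix (m ⊕ n) (m ⊕ n) 𝕜} (hJ : J.PosDef)
    (X : Matrix n m 𝕜) :
    (fromCols X (1 : Matrix n n 𝕜) * J * (fromCols X (1 : Matrix n n 𝕜))ᴴ).PosDef := by
  refine hJ.mul_mul_conjTranspose_same fun v w hvw => funext fun i => ?_
  simpa [vecMul_fromCols] using congrFun hvw (Sum.inr i)

variable [DecidableEq m]

theorem isUnit_det_schur {A : Matrix m m 𝕜} {B : Matrix m n 𝕜} {C : Matrix n m 𝕜}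
    {D : Matrix n n 𝕜} (hH : (fromBlocks A B C D).PosDef) :
    IsUnit (D - C * A⁻¹ * B).det := by
  have hA : A.PosDef := hH.submatrix Sum.inl_injective
  have := hA.isUnit.invertible
  have hdet := (isUnit_iff_isUnit_det _).mp hH.isUnit
  rw [det_fromBlocks₁₁, invOf_eq_nonsing_inv] at hdet
  exact isUnit_of_mul_isUnit_right hdet

theorem inv_schur {A : Matrix m m 𝕜} {B : Matrix m n 𝕜} {C : Matrix n m 𝕜}
    {D : Matrix n n 𝕜} (hH : (fromBlocks A B C D).PosDef) :
    (D - C * A⁻¹ * B)⁻¹.PosDef := by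
  have hA : A.PosDef := hH.submatrix Sum.inl_injective
  rw [← toBlocks₂₂_inv_fromBlocks B C D ((isUnit_iff_isUnit_det A).mp hA.isUnit)
    hH.isUnit_det_schur]
  exact hH.inv.submatrix Sum.inr_injective

theorem trace_inv_mul_toBlocks₁₁_lt [Nonempty n] {A : Matrix m m 𝕜} {B : Matrix m n 𝕜}
    {C : Matrix n m 𝕜} {D : Matrix n n 𝕜} {J : Matrix (m ⊕ n) (m ⊕ n) 𝕜}
    (hH : (fromBlocks A B C D).PosDef) (hJ : J.PosDef) :
    (A⁻¹ * J.toBlocks₁₁).trace < ((fromBlocks A B C D)⁻¹ * J).trace := by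
  have hA : A.PosDef := hH.submatrix Sum.inl_injective
  obtain ⟨-, hC, -, -⟩ := isHermitian_fromBlocks_iff.mp hH.isHermitian
  have hL : fromRows (-(A⁻¹ * B)) (1 : Matrix n n 𝕜) =
      (fromCols (-(C * A⁻¹)) (1 : Matrix n n 𝕜))ᴴ := by
    simp [conjTranspose_fromCols_eq_fromRows_conjTranspose, ← hC, conjTranspose_nonsing_inv,
      hA.isHermitian.eq]
  rw [trace_inv_fromBlocks_mul B C D ((isUnit_iff_isUnit_det A).mp hA.isUnit)
    hH.isUnit_det_schur, hL, lt_add_iff_pos_right]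
  exact hH.inv_schur.trace_mul_pos (hJ.fromCols_one_mul_mul_conjTranspose _)

end Matrix.PosDef

/-- Monotonicity of the composite likelihood penalty term: if `H` and `J` are
symmetric positive definite `(p+q)×(p+q)` matrices partitioned conformably into
blocks with `H₁₁, J₁₁` of size `p×p` (and `q ≥ 1`), then
`tr(H₁₁⁻¹ J₁₁) < tr(H⁻¹ J)`. -/
theorem trace_penalty_strict_mono (p q : ℕ) (hq : 0 < q)
    (H11 : Matrix (Fin p) (Fin p) ℝ) (H12 : Matrix (Fin p) (Fin q) ℝ)
    (H21 : Matrix (Fin q) (Fin p) ℝ) (H22 : Matrix (Fin q) (Fin q) ℝ)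
    (J11 : Matrix (Fin p) (Fin p) ℝ) (J12 : Matrix (Fin p) (Fin q) ℝ)
    (J21 : Matrix (Fin q) (Fin p) ℝ) (J22 : Matrix (Fin q) (Fin q) ℝ)
    (hH : (Matrix.fromBlocks H11 H12 H21 H22).PosDef)
    (hJ : (Matrix.fromBlocks J11 J12 J21 J22).PosDef) :
    (H11⁻¹ * J11).trace <
      ((Matrix.fromBlocks H11 H12 H21 H22)⁻¹ *
        (Matrix.fromBlocks J11 J12 J21 J22)).trace := by
  have : Nonempty (Fin q) := ⟨⟨0, hq⟩⟩
  exact hH.trace_inv_mul_toBlocks₁₁_lt hJ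
end

section
/- Let p₁ ≥ 0 and m ≥ 0 be integers, set p₂ = p₁ + m, and let H be a real symmetric positive definite p₂×p₂ matrix partitioned as H = [[H_θθ, H_θζ],[H_ζθ, H_ζζ]] with H_θθ of size p₁×p₁. Form the (p₁+p₂)×(p₁+p₂) block matrix B = [[−J₁₁H_θθ⁻¹, J₁₂H⁻¹],[−J₂₁H_θθ⁻¹, J₂₂H⁻¹]], where J₁₁ = H_θθ, J₁₂ = [H_θθ, H_θζ] (the first p₁ rows of H), J₂₁ = J₁₂ᵀ, and J₂₂ = H. Then the characteristic polynomial of B equals X^{2p₁}(X−1)^m; that is, B has eigenvalue 0 with algebraic multiplicity 2p₁ and eigenvalue 1 with algebraic multiplicity m. (This is the full-likelihood case, where the matrix J coincides with the Hessian matrix H, so all m nonzero eigenvalues λᵢ of B equal 1.) -/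
open Matrix Polynomial

/-!
Since `J = H`, the blocks of `B` collapse: `H_θθ H_θθ⁻¹ = H H⁻¹ = 1`, `J₁₂ H⁻¹ = [1, 0] =: P`
(as `J₁₂` is the first block row of `H`), and `J₂₁ H_θθ⁻¹ = [1; K] =: Q` by symmetry of `H_θθ`.
So `B = [[-1, P], [-Q, 1]] = [P; 1] * [-Q, 1]` because `P Q = 1`, and Sylvester's identity
gives `χ_B = X^p₁ χ_{1 - Q P}`. Finally `1 - Q P = [[0, 0], [-K, 1]]` is block triangular, with
characteristic polynomial `X^p₁ (X - 1)^m`.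
-/

namespace Matrix

variable {R : Type*} [CommRing R] {m n k : Type*}

theorem fromBlocks_neg_mul_eq_fromRows_mul_fromCols [Fintype n] [DecidableEq n]
    (P : Matrix m n R) (Q : Matrix n m R) :
    fromBlocks (-(P * Q)) P (-Q) 1 = fromRows P 1 * fromCols (-Q) 1 := by
  simp

variable [Fintype m] [Fintype n] [Fintype k] [DecidableEq m] [DecidableEq n] [DecidableEq k]

theorem charpoly_fromBlocks_neg_mul (P : Matrix m n R) (Q : Matrix n m R) :
    (fromBlocks (-(P * Q)) P (-Q) 1).charpoly = X ^ Fintype.card m * (1 - Q * P).charpoly := by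
  rw [fromBlocks_neg_mul_eq_fromRows_mul_fromCols,
    charpoly_mul_comm_of_le _ _ (by simp [Fintype.card_sum]), fromCols_mul_fromRows]
  simp [Fintype.card_sum, neg_add_eq_sub]

theorem charpoly_one_sub_fromRows_one_mul_fromCols_one_zero (K : Matrix k m R) :
    (1 - fromRows (1 : Matrix m m R) K * fromCols 1 (0 : Matrix m k R)).charpoly =
      X ^ Fintype.card m * (X - 1) ^ Fintype.card k := by
  have : 1 - fromRows (1 : Matrix m m R) K * fromCols 1 (0 : Matrix m k R) =
      fromBlocks 0 0 (-K) 1 := by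
    rw [fromRows_mul_fromCols, ← fromBlocks_one, sub_eq_add_neg, fromBlocks_neg, fromBlocks_add]
    simp
  rw [this, charpoly_fromBlocks_zero₁₂, charpoly_zero, charpoly_one]

theorem charpoly_fromBlocks_neg_one_fromCols_one_zero (K : Matrix k m R) :
    (fromBlocks (-1) (fromCols (1 : Matrix m m R) (0 : Matrix m k R))
      (-fromRows (1 : Matrix m m R) K) (1 : Matrix (m ⊕ k) (m ⊕ k) R)).charpoly =
      X ^ Fintype.card m * X ^ Fintype.card m * (X - 1) ^ Fintype.card k := by
  have hPQ :
      fromCols (1 : Matrix m m R) (0 : Matrix m k R) * fromRows (1 : Matrix m m R) K = 1 := by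
    simp [fromCols_mul_fromRows]
  have := charpoly_fromBlocks_neg_mul (fromCols (1 : Matrix m m R) (0 : Matrix m k R))
    (fromRows (1 : Matrix m m R) K)
  rwa [hPQ, charpoly_one_sub_fromRows_one_mul_fromCols_one_zero, ← mul_assoc] at this

theorem fromCols_mul_fromBlocks_inv {A : Matrix m m R} {B : Matrix m n R} {C : Matrix n m R}
    {D : Matrix n n R} (h : IsUnit (fromBlocks A B C D).det) :
    fromCols A B * (fromBlocks A B C D)⁻¹ = fromCols 1 0 := by
  have : fromCols A B = fromCols (1 : Matrix m m R) (0 : Matrix m n R) * fromBlocks A B C D := by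
    simp [fromCols_mul_fromBlocks]
  rw [this, Matrix.mul_assoc, mul_nonsing_inv _ h, Matrix.mul_one]

omit [Fintype n] [DecidableEq n] in
theorem transpose_fromCols_mul_inv {A : Matrix m m R} (B : Matrix m n R) (hA : A.IsSymm)
    (h : IsUnit A.det) : (fromCols A B)ᵀ * A⁻¹ = fromRows 1 (Bᵀ * A⁻¹) := by
  rw [transpose_fromCols, hA.eq, fromRows_mul, mul_nonsing_inv _ h]

end Matrix

/-- In the full-likelihood case (`J = H`), the matrix
`B = [[−J₁₁H_θθ⁻¹, J₁₂H⁻¹],[−J₂₁H_θθ⁻¹, J₂₂H⁻¹]]`, where `J₁₁ = H_θθ`,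
`J₁₂` is the first `p₁` rows of `H`, `J₂₁ = J₁₂ᵀ` and `J₂₂ = H`, has characteristic
polynomial `X^(2p₁) (X − 1)^m`: eigenvalue `0` with multiplicity `2p₁` and
eigenvalue `1` with multiplicity `m`. -/
theorem charpoly_fullLikelihood_B (p₁ m : ℕ)
    (Htt : Matrix (Fin p₁) (Fin p₁) ℝ) (Htz : Matrix (Fin p₁) (Fin m) ℝ)
    (Hzt : Matrix (Fin m) (Fin p₁) ℝ) (Hzz : Matrix (Fin m) (Fin m) ℝ)
    (hH : (Matrix.fromBlocks Htt Htz Hzt Hzz).PosDef) :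
    (Matrix.fromBlocks
        (-(Htt * Htt⁻¹))
        ((Matrix.fromCols Htt Htz) * (Matrix.fromBlocks Htt Htz Hzt Hzz)⁻¹)
        (-((Matrix.fromCols Htt Htz)ᵀ * Htt⁻¹))
        ((Matrix.fromBlocks Htt Htz Hzt Hzz) *
          (Matrix.fromBlocks Htt Htz Hzt Hzz)⁻¹)).charpoly =
      X ^ (2 * p₁) * (X - 1) ^ m := by
  have hHtt : Htt.PosDef := hH.submatrix Sum.inl_injective
  have hHtt_symm : Htt.IsSymm := isHermitian_iff_isSymm.mp hHtt.isHermitian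
  have hHtt_unit : IsUnit Htt.det := hHtt.det_pos.ne'.isUnit
  have hH_unit : IsUnit (fromBlocks Htt Htz Hzt Hzz).det := hH.det_pos.ne'.isUnit
  rw [mul_nonsing_inv _ hHtt_unit, mul_nonsing_inv _ hH_unit, fromCols_mul_fromBlocks_inv hH_unit,
    transpose_fromCols_mul_inv Htz hHtt_symm hHtt_unit,
    charpoly_fromBlocks_neg_one_fromCols_one_zero, Fintype.card_fin, Fintype.card_fin, ← pow_add,
    two_mul]
end

section
/- Let p₁ ≥ 0 and m ≥ 0 be integers, set p₂ = p₁ + m, and let H be a real symmetric positive definite p₂×p₂ matrix with top-left p₁×p₁ block H_θθ. Let J be a real symmetric positive semidefinite p₂×p₂ matrix; write J₁₁ for its top-left p₁×p₁ block, J₁₂ for its first p₁ rows (a p₁×p₂ matrix), and J₂₁ = J₁₂ᵀ. Form the (p₁+p₂)×(p₁+p₂) block matrix B = [[−J₁₁H_θθ⁻¹, J₁₂H⁻¹],[−J₂₁H_θθ⁻¹, J·H⁻¹]]. Then X^{2p₁} divides the characteristic polynomial of B; equivalently, B has eigenvalue 0 with algebraic multiplicity at least 2p₁, so B has at most m nonzero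 eigenvalues (counted with multiplicity). -/
open Matrix Polynomial

/-!
With `E` the inclusion of the first `p₁` coordinates, `B = L * (J * Q)` for
`L = [Eᵀ; 1]` and `Q = [-(E * H_θθ⁻¹) | H⁻¹]`. Since `χ(U * V) = X ^ k * χ(V * U)` when `U` has
`k` more rows than columns, we get `χ_B = X ^ p₁ * χ(J * (Q * L))` with
`Q * L = H⁻¹ - diag(H_θθ⁻¹, 0)`. This matrix kills the first `p₁` columns of `H`, hence factors
through `Fin m`, and the same identity yields a second factor `X ^ p₁`.
-/

namespace Matrix

variable {R : Type*} [CommRing R] {a b : Type*} [Fintype a] [Fintype b] [DecidableEq a]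
  [DecidableEq b]

lemma fromBlocks_neg_mul_eq_fromRows_mul_mul_fromCols
    {J : Matrix (a ⊕ b) (a ⊕ b) R} (hJ : J.IsSymm) (G : Matrix a a R)
    (M : Matrix (a ⊕ b) (a ⊕ b) R) :
    fromBlocks (-(J.toBlocks₁₁ * G)) (fromCols J.toBlocks₁₁ J.toBlocks₁₂ * M)
        (-((fromCols J.toBlocks₁₁ J.toBlocks₁₂)ᵀ * G)) (J * M) =
      fromRows (fromCols (1 : Matrix a a R) (0 : Matrix a b R)) (1 : Matrix (a ⊕ b) (a ⊕ b) R) *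
        (J * fromCols (-fromRows G (0 : Matrix b a R)) M) := by
  have hK : fromCols (1 : Matrix a a R) (0 : Matrix a b R) * J =
      fromCols J.toBlocks₁₁ J.toBlocks₁₂ := by
    conv_lhs => rw [← fromBlocks_toBlocks J]
    rw [fromCols_mul_fromBlocks]
    simp
  have hJE : J * fromRows (1 : Matrix a a R) (0 : Matrix b a R) =
      (fromCols J.toBlocks₁₁ J.toBlocks₁₂)ᵀ := by
    rw [← hK, transpose_mul, hJ.eq, transpose_fromCols, transpose_one, transpose_zero]
  have hG : fromRows G (0 : Matrix b a R) =
      fromRows (1 : Matrix a a R) (0 : Matrix b a R) * G := by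
    rw [fromRows_mul, Matrix.one_mul, Matrix.zero_mul]
  rw [← Matrix.mul_assoc, fromRows_mul, hK, Matrix.one_mul, fromRows_mul_fromCols,
    Matrix.mul_neg, Matrix.mul_neg, fromCols_mul_fromRows, hG, ← Matrix.mul_assoc, hJE]
  simp

lemma fromCols_mul_fromRows_fromCols_one_zero (G : Matrix a a R)
    (M : Matrix (a ⊕ b) (a ⊕ b) R) :
    fromCols (-fromRows G (0 : Matrix b a R)) M *
      fromRows (fromCols (1 : Matrix a a R) (0 : Matrix a b R)) (1 : Matrix (a ⊕ b) (a ⊕ b) R) =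
      M - fromBlocks G 0 0 0 := by
  rw [fromCols_mul_fromRows, Matrix.neg_mul, fromRows_mul_fromCols]
  simp [neg_add_eq_sub]

lemma inv_sub_fromBlocks_inv_zero_eq_mul {A : Matrix a a R} {B : Matrix a b R}
    {C : Matrix b a R} {D : Matrix b b R} (hA : IsUnit A.det)
    (hH : IsUnit (fromBlocks A B C D).det) :
    (fromBlocks A B C D)⁻¹ - fromBlocks A⁻¹ 0 0 0 =
      fromRows (-(A⁻¹ * B)) (1 : Matrix b b R) *
        (fromCols (0 : Matrix b a R) (1 : Matrix b b R) * (fromBlocks A B C D)⁻¹) := by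
  refine (isUnit_iff_isUnit_det _ |>.mpr hH).mul_left_injective ?_
  dsimp only
  rw [Matrix.sub_mul, nonsing_inv_mul _ hH, fromBlocks_multiply, Matrix.mul_assoc,
    Matrix.mul_assoc, nonsing_inv_mul _ hH, Matrix.mul_one, nonsing_inv_mul _ hA,
    fromRows_mul_fromCols, ← fromBlocks_one, sub_eq_add_neg, fromBlocks_neg, fromBlocks_add]
  simp

end Matrix

/-- For `H` symmetric positive definite of size `p₂ = p₁ + m` with top-left block
`H_θθ`, and `J` symmetric positive semidefinite of the same size with top-left block
`J₁₁` and first `p₁` rows `J₁₂` (and `J₂₁ = J₁₂ᵀ`), the matrix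
`B = [[−J₁₁H_θθ⁻¹, J₁₂H⁻¹],[−J₂₁H_θθ⁻¹, J·H⁻¹]]` has eigenvalue `0` with algebraic
multiplicity at least `2p₁`: `X^(2p₁)` divides its characteristic polynomial. -/
theorem X_pow_dvd_charpoly_B (p₁ m : ℕ)
    (Htt : Matrix (Fin p₁) (Fin p₁) ℝ) (Htz : Matrix (Fin p₁) (Fin m) ℝ)
    (Hzt : Matrix (Fin m) (Fin p₁) ℝ) (Hzz : Matrix (Fin m) (Fin m) ℝ)
    (hH : (Matrix.fromBlocks Htt Htz Hzt Hzz).PosDef)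
    (J : Matrix (Fin p₁ ⊕ Fin m) (Fin p₁ ⊕ Fin m) ℝ) (hJ : J.PosSemidef) :
    (X : Polynomial ℝ) ^ (2 * p₁) ∣
      (Matrix.fromBlocks
        (-(J.toBlocks₁₁ * Htt⁻¹))
        ((Matrix.fromCols J.toBlocks₁₁ J.toBlocks₁₂) *
          (Matrix.fromBlocks Htt Htz Hzt Hzz)⁻¹)
        (-((Matrix.fromCols J.toBlocks₁₁ J.toBlocks₁₂)ᵀ * Htt⁻¹))
        (J * (Matrix.fromBlocks Htt Htz Hzt Hzz)⁻¹)).charpoly := by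
  have hHtt : Htt.PosDef := hH.submatrix Sum.inl_injective
  rw [fromBlocks_neg_mul_eq_fromRows_mul_mul_fromCols (isHermitian_iff_isSymm.mp hJ.1),
    charpoly_mul_comm_of_le _ _ (by simp), Matrix.mul_assoc,
    fromCols_mul_fromRows_fromCols_one_zero,
    inv_sub_fromBlocks_inv_zero_eq_mul (isUnit_iff_isUnit_det _ |>.mp hHtt.isUnit)
      (isUnit_iff_isUnit_det _ |>.mp hH.isUnit),
    ← Matrix.mul_assoc, charpoly_mul_comm_of_le _ _ (by simp)]
  simp only [Fintype.card_sum, Fintype.card_fin, Nat.add_sub_cancel]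
  rw [← mul_assoc, ← pow_add, two_mul]
  exact dvd_mul_right _ _
end

section
/- Let H₁ be a real symmetric positive definite p₁×p₁ matrix, H₂ a real symmetric positive definite p₂×p₂ matrix, and J a real symmetric positive semidefinite (p₁+p₂)×(p₁+p₂) matrix partitioned as J = [[J₁₁, J₁₂],[J₂₁, J₂₂]] with J₁₁ of size p₁×p₁. Define V = diag(H₁⁻¹, H₂⁻¹) · J · diag(H₁⁻¹, H₂⁻¹) (a positive semidefinite matrix), D = [[−H₁, 0],[0, H₂]], and B = [[−J₁₁H₁⁻¹, J₁₂H₂⁻¹],[−J₂₁H₁⁻¹, J₂₂H₂⁻¹]]. Then the characteristic polynomial of V^{1/2} D V^{1/2} equals the characteristic polynomial of B, where V^{1/2} denotes the positive semidefinite square root of V. In particular, V^{1/2} D V^{1/2} and B have the same eigenvalues with the same multiplicities. -/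
open Matrix Polynomial

set_option maxHeartbeats 1000000 in
set_option synthInstance.maxHeartbeats 200000 in
lemma my_charpoly_mul_comm {K : Type*} [Field K] {n : Type*} [Fintype n] [DecidableEq n]
    (A B : Matrix n n K) : (A * B).charpoly = (B * A).charpoly := by
  classical
  have hinj : Function.Injective (algebraMap K[X] (RatFunc K)) :=
    IsFractionRing.injective _ _
  apply hinj
  set f : K[X] →+* RatFunc K := algebraMap K[X] (RatFunc K) with hf
  have hx : f X ≠ 0 := by
    intro h
    exact X_ne_zero (hinj (by simpa using h))
  have hmap : ∀ M : Matrix n n K,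
      f M.charpoly = (scalar n (f X) - M.map (f.comp C)).det := by
    intro M
    rw [Matrix.charpoly, RingHom.map_det]
    congr 1
    ext i j
    by_cases h : i = j <;>
      simp [charmatrix, Matrix.sub_apply, Matrix.scalar_apply, Matrix.diagonal_apply, h,
        Matrix.map_apply]
  rw [hmap, hmap]
  have hAB : (A * B).map (f.comp C) = A.map (f.comp C) * B.map (f.comp C) :=
    Matrix.map_mul
  have hBA : (B * A).map (f.comp C) = B.map (f.comp C) * A.map (f.comp C) :=
    Matrix.map_mul
  rw [hAB, hBA]
  set A' := A.map (f.comp C)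
  set B' := B.map (f.comp C)
  have key : ∀ P Q : Matrix n n (RatFunc K),
      scalar n (f X) - P * Q = (f X) • ((1 : Matrix n n (RatFunc K)) - ((f X)⁻¹ • P) * Q) := by
    intro P Q
    rw [smul_sub, smul_mul_assoc, smul_smul, mul_inv_cancel₀ hx, one_smul,
      Matrix.smul_one_eq_diagonal]
    rfl
  rw [key, key, Matrix.det_smul, Matrix.det_smul,
    Matrix.det_one_sub_mul_comm, mul_smul_comm, ← smul_mul_assoc]

/-- With `H₁, H₂` symmetric positive definite, `J` symmetric positive semidefinite
and conformably partitioned, `V = diag(H₁⁻¹,H₂⁻¹)·J·diag(H₁⁻¹,H₂⁻¹)`,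
`D = diag(−H₁, H₂)` and `B = [[−J₁₁H₁⁻¹, J₁₂H₂⁻¹],[−J₂₁H₁⁻¹, J₂₂H₂⁻¹]]`,
the matrices `V^{1/2} D V^{1/2}` and `B` have the same characteristic polynomial
(hence the same eigenvalues with multiplicities); here `R = V^{1/2}` is the
positive semidefinite square root of `V`, i.e. `R` is positive semidefinite with
`R * R = V`. -/
theorem charpoly_sqrt_sandwich_eq_charpoly_B (p₁ p₂ : ℕ)
    (H₁ : Matrix (Fin p₁) (Fin p₁) ℝ) (H₂ : Matrix (Fin p₂) (Fin p₂) ℝ)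
    (hH₁ : H₁.PosDef) (hH₂ : H₂.PosDef)
    (J11 : Matrix (Fin p₁) (Fin p₁) ℝ) (J12 : Matrix (Fin p₁) (Fin p₂) ℝ)
    (J21 : Matrix (Fin p₂) (Fin p₁) ℝ) (J22 : Matrix (Fin p₂) (Fin p₂) ℝ)
    (hJ : (Matrix.fromBlocks J11 J12 J21 J22).PosSemidef)
    (R : Matrix (Fin p₁ ⊕ Fin p₂) (Fin p₁ ⊕ Fin p₂) ℝ)
    (hR : R.PosSemidef)
    (hRR : R * R =
      (Matrix.fromBlocks H₁⁻¹ 0 0 H₂⁻¹) * (Matrix.fromBlocks J11 J12 J21 J22) *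
        (Matrix.fromBlocks H₁⁻¹ 0 0 H₂⁻¹)) :
    (R * (Matrix.fromBlocks (-H₁) 0 0 H₂) * R).charpoly =
      (Matrix.fromBlocks
        (-(J11 * H₁⁻¹)) (J12 * H₂⁻¹)
        (-(J21 * H₁⁻¹)) (J22 * H₂⁻¹)).charpoly := by
  have hu1 : IsUnit H₁.det := isUnit_iff_ne_zero.2 hH₁.det_pos.ne'
  have hu2 : IsUnit H₂.det := isUnit_iff_ne_zero.2 hH₂.det_pos.ne'
  set A := Matrix.fromBlocks H₁⁻¹ 0 0 H₂⁻¹ with hA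
  set Jm := Matrix.fromBlocks J11 J12 J21 J22 with hJm
  set D := Matrix.fromBlocks (-H₁) 0 0 H₂ with hD
  set S : Matrix (Fin p₁ ⊕ Fin p₂) (Fin p₁ ⊕ Fin p₂) ℝ :=
    Matrix.fromBlocks (-1) 0 0 1 with hS
  have hAD : A * D = S := by
    rw [hA, hD, hS, Matrix.fromBlocks_multiply]
    simp [Matrix.nonsing_inv_mul _ hu1, Matrix.nonsing_inv_mul _ hu2, Matrix.mul_neg]
  have hAS : A * S = S * A := by
    rw [hA, hS, Matrix.fromBlocks_multiply, Matrix.fromBlocks_multiply]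
    simp [Matrix.mul_neg, Matrix.neg_mul]
  have hB : Matrix.fromBlocks
        (-(J11 * H₁⁻¹)) (J12 * H₂⁻¹)
        (-(J21 * H₁⁻¹)) (J22 * H₂⁻¹) = Jm * A * S := by
    rw [hJm, hA, hS, Matrix.fromBlocks_multiply, Matrix.fromBlocks_multiply]
    simp [Matrix.mul_neg]
  calc (R * D * R).charpoly
      = (R * (R * D)).charpoly := my_charpoly_mul_comm (R * D) R
    _ = (A * (Jm * (A * D))).charpoly := by
        rw [← mul_assoc, hRR, mul_assoc, mul_assoc]
    _ = (Jm * (A * D) * A).charpoly := my_charpoly_mul_comm A (Jm * (A * D))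
    _ = (Jm * A * S).charpoly := by
        rw [hAD, mul_assoc, ← hAS, ← mul_assoc]
    _ = _ := by rw [hB]
end

section
/- For every integer m ≥ 12, the ratio R(2) = (m+1)^{(m+1)/2} · Γ(m/2) · e^{−1} / (m^{m/2} · Γ((m+1)/2)) is strictly less than 1, where Γ denotes the Gamma function. (R(2) is the value at t = 2 of the ratio g_{m+1}(t)/g_m(t) of the densities of the sample means of m+1 and of m independent chi-square(1) random variables.) -/
/-!
Log-convexity of `Γ` gives `Γ(y + 1/2) ≤ √y Γ(y)`; with `y = (m - 1)/2` and `Γ(y + 1) = y Γ(y)`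
this bounds `Γ(m/2) / Γ((m+1)/2)` by `1/√y`. Together with `(1 + 1/m)^((m+1)/2) ≤ e^((m+1)/(2m))`
the ratio is at most `√(2m/(m-1)) e^(-(m-1)/(2m))`, which for `m ≥ 12` is at most
`√(24/11) e^(-11/24) < 1`.
-/

open Real

namespace Real

theorem Gamma_add_half_le_sqrt_mul_Gamma {x : ℝ} (hx : 0 < x) :
    Gamma (x + 1 / 2) ≤ √x * Gamma x := by
  have hΓ : 0 ≤ Gamma x := (Gamma_pos_of_pos hx).le
  calc Gamma (x + 1 / 2) = Gamma (1 / 2 * x + 1 / 2 * (x + 1)) := by ring_nf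
    _ ≤ Gamma x ^ (1 / 2 : ℝ) * Gamma (x + 1) ^ (1 / 2 : ℝ) :=
      Gamma_mul_add_mul_le_rpow_Gamma_mul_rpow_Gamma hx (by linarith) one_half_pos one_half_pos
        (by norm_num)
    _ = √x * Gamma x := by
      rw [Gamma_add_one hx.ne', ← sqrt_eq_rpow, ← sqrt_eq_rpow, sqrt_mul hx.le]
      linear_combination √x * mul_self_sqrt hΓ

theorem add_one_rpow_le_rpow_mul_exp {x a : ℝ} (hx : 0 < x) (ha : 0 ≤ a) :
    (x + 1) ^ a ≤ x ^ a * exp (a / x) := by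
  calc (x + 1) ^ a = x ^ a * (1 / x + 1) ^ a := by
        rw [← mul_rpow hx.le (by positivity), mul_add, mul_one_div_cancel hx.ne', mul_one, add_comm]
    _ ≤ x ^ a * exp (1 / x) ^ a := by gcongr; exact add_one_le_exp _
    _ = x ^ a * exp (a / x) := by rw [← exp_mul]; ring_nf

theorem exp_neg_eleven_div_twelve_lt : exp (-(11 / 12)) < 11 / 24 := by
  have h := exp_bound_div_one_sub_of_interval' (x := 1 / 12) (by norm_num) (by norm_num)
  have hsplit : exp (-(11 / 12)) = exp (-1) * exp (1 / 12) := by rw [← exp_add]; norm_num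
  nlinarith [exp_neg_one_lt_d9, exp_pos (-1), exp_pos (1 / 12)]

end Real

theorem sqrt_mul_exp_lt_sqrt_sub_one_div_two {x : ℝ} (hx : 12 ≤ x) :
    √x * exp (-(11 / 24)) < √((x - 1) / 2) := by
  rw [lt_sqrt (by positivity), mul_pow, sq_sqrt (by linarith), sq, ← exp_add]
  nlinarith [exp_neg_eleven_div_twelve_lt, show -(11 / 24) + -(11 / 24) = -(11 / 12 : ℝ) by norm_num]

theorem add_one_rpow_mul_Gamma_mul_exp_lt {x : ℝ} (hx : 12 ≤ x) :
    (x + 1) ^ ((x + 1) / 2) * Gamma (x / 2) * exp (-1) < x ^ (x / 2) * Gamma ((x + 1) / 2) := by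
  have hx₀ : 0 < x := by linarith
  set y := (x - 1) / 2 with hy_def
  have hy : 0 < y := by linarith
  have hGamma_half : Gamma (x / 2) ≤ √y * Gamma y := by
    rw [show x / 2 = y + 1 / 2 by rw [hy_def]; ring]
    exact Gamma_add_half_le_sqrt_mul_Gamma hy
  have hGamma_succ : Gamma ((x + 1) / 2) = y * Gamma y := by
    rw [← Gamma_add_one hy.ne', hy_def]; ring_nf
  have hpow : (x + 1) ^ ((x + 1) / 2) ≤ x ^ (x / 2) * √x * exp ((x + 1) / 2 / x) := by
    calc (x + 1) ^ ((x + 1) / 2) ≤ x ^ ((x + 1) / 2) * exp ((x + 1) / 2 / x) :=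
          add_one_rpow_le_rpow_mul_exp hx₀ (by linarith)
      _ = x ^ (x / 2) * √x * exp ((x + 1) / 2 / x) := by
          rw [add_div, rpow_add hx₀, sqrt_eq_rpow]
  have hexp : exp ((x + 1) / 2 / x) * exp (-1) ≤ exp (-(11 / 24)) := by
    rw [← exp_add]
    gcongr
    rw [div_div, div_add' _ _ _ (by positivity), div_le_iff₀ (by positivity)]
    linarith
  calc (x + 1) ^ ((x + 1) / 2) * Gamma (x / 2) * exp (-1)
      ≤ x ^ (x / 2) * √x * exp ((x + 1) / 2 / x) * (√y * Gamma y) * exp (-1) := by gcongr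
    _ = x ^ (x / 2) * √y * Gamma y * √x * (exp ((x + 1) / 2 / x) * exp (-1)) := by ring
    _ ≤ x ^ (x / 2) * √y * Gamma y * √x * exp (-(11 / 24)) := by gcongr
    _ = x ^ (x / 2) * √y * Gamma y * (√x * exp (-(11 / 24))) := by ring
    _ < x ^ (x / 2) * √y * Gamma y * √y := by
      gcongr
      exact sqrt_mul_exp_lt_sqrt_sub_one_div_two hx
    _ = x ^ (x / 2) * Gamma ((x + 1) / 2) := by
      rw [hGamma_succ]
      linear_combination x ^ (x / 2) * Gamma y * mul_self_sqrt hy.le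

/-- For every integer `m ≥ 12`, the density ratio value
`R(2) = (m+1)^((m+1)/2) Γ(m/2) e⁻¹ / (m^(m/2) Γ((m+1)/2))` is strictly
less than `1`. -/
theorem density_ratio_at_two_lt_one (m : ℕ) (hm : 12 ≤ m) :
    ((m : ℝ) + 1) ^ (((m : ℝ) + 1) / 2) * Real.Gamma ((m : ℝ) / 2) *
        Real.exp (-1) /
      ((m : ℝ) ^ ((m : ℝ) / 2) * Real.Gamma (((m : ℝ) + 1) / 2)) < 1 :=
  (div_lt_one (by positivity)).2 (add_one_rpow_mul_Gamma_mul_exp_lt (by exact_mod_cast hm))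
end

section
/- For every integer m ≥ 3, one has (m+1)^{(m+1)/2} · Γ(m/2) · e^{−1} / (m^{m/2} · Γ((m+1)/2)) ≤ √2 · (m(m+1))^{1/2}/(m−1) · (1 + 1/(m−2))^{−(m−2)/2}, where Γ denotes the Gamma function. -/
/-!
Log-convexity of `Γ` on `[(m-1)/2, (m+1)/2]`, combined with `Γ((m+1)/2) = ((m-1)/2) Γ((m-1)/2)`,
gives `Γ(m/2) √((m-1)/2) ≤ Γ((m+1)/2)`. The powers are controlled by `(1 + 1/x)^x ≤ e`, on the
left with `x = m` and on the right with `x = m - 2`. Both sides then carry the factor `e^(-1/2)`,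
and what remains is `√(m-1) ≤ √m`.
-/

open Real

namespace Real

theorem Gamma_mul_sqrt_le_Gamma_add_half {x : ℝ} (hx : 1 / 2 < x) :
    Gamma x * √(x - 1 / 2) ≤ Gamma (x + 1 / 2) := by
  have hx' : 0 < x - 1 / 2 := by linarith
  have hconv := Gamma_mul_add_mul_le_rpow_Gamma_mul_rpow_Gamma hx' (by linarith : 0 < x + 1 / 2)
    one_half_pos one_half_pos (by norm_num)
  rw [show 1 / 2 * (x - 1 / 2) + 1 / 2 * (x + 1 / 2) = x by ring, ← sqrt_eq_rpow,
    ← sqrt_eq_rpow] at hconv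
  have hrec : (x - 1 / 2) * Gamma (x - 1 / 2) = Gamma (x + 1 / 2) := by
    rw [← Gamma_add_one hx'.ne']; ring_nf
  calc Gamma x * √(x - 1 / 2)
      ≤ √(Gamma (x - 1 / 2)) * √(Gamma (x + 1 / 2)) * √(x - 1 / 2) := by gcongr
    _ = √((x - 1 / 2) * Gamma (x - 1 / 2)) * √(Gamma (x + 1 / 2)) := by
      rw [sqrt_mul hx'.le]; ring
    _ = Gamma (x + 1 / 2) := by rw [hrec, mul_self_sqrt (Gamma_pos_of_pos (by linarith)).le]

theorem one_add_one_div_rpow_mul_le_exp {x t : ℝ} (hx : 0 < x) (ht : 0 ≤ t) :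
    (1 + 1 / x) ^ (x * t) ≤ exp t :=
  calc (1 + 1 / x) ^ (x * t) ≤ exp (1 / x) ^ (x * t) := by
        gcongr
        linarith [add_one_le_exp (1 / x)]
    _ = exp t := by rw [← exp_mul]; field_simp

theorem exp_neg_le_one_add_one_div_rpow_neg_mul {x t : ℝ} (hx : 0 < x) (ht : 0 ≤ t) :
    exp (-t) ≤ (1 + 1 / x) ^ (-(x * t)) := by
  rw [exp_neg, rpow_neg (by positivity)]
  exact inv_anti₀ (by positivity) (one_add_one_div_rpow_mul_le_exp hx ht)

theorem add_one_rpow_mul_le_exp_mul_rpow {x t : ℝ} (hx : 0 < x) (ht : 0 ≤ t) :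
    (x + 1) ^ (x * t) ≤ exp t * x ^ (x * t) := by
  rw [show x + 1 = x * (1 + 1 / x) by field_simp, mul_rpow hx.le (by positivity),
    mul_comm (exp t)]
  gcongr
  exact one_add_one_div_rpow_mul_le_exp hx ht

end Real

theorem add_one_rpow_mul_Gamma_div_le {a : ℝ} (ha : 1 < a) :
    (a + 1) ^ ((a + 1) / 2) * Gamma (a / 2) * exp (-1) / (a ^ (a / 2) * Gamma ((a + 1) / 2)) ≤
      √2 * √(a + 1) / √(a - 1) * exp (-(1 / 2)) := by
  have hΓ := Gamma_mul_sqrt_le_Gamma_add_half (x := a / 2) (by linarith)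
  rw [show a / 2 + 1 / 2 = (a + 1) / 2 by ring, show a / 2 - 1 / 2 = (a - 1) / 2 by ring] at hΓ
  have hpow : (a + 1) ^ ((a + 1) / 2) ≤ √(a + 1) * (exp (1 / 2) * a ^ (a / 2)) := by
    rw [add_div, rpow_add (by linarith), ← sqrt_eq_rpow, mul_comm, div_eq_mul_one_div a]
    gcongr
    exact add_one_rpow_mul_le_exp_mul_rpow (by linarith) (by norm_num)
  calc _ ≤ √(a + 1) * (exp (1 / 2) * a ^ (a / 2)) * (Gamma ((a + 1) / 2) / √((a - 1) / 2)) *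
          exp (-1) / (a ^ (a / 2) * Gamma ((a + 1) / 2)) := by
        gcongr
        rwa [le_div_iff₀ (sqrt_pos.2 (by linarith))]
    _ = √2 * √(a + 1) / √(a - 1) * (exp (1 / 2) * exp (-1)) := by
        rw [sqrt_div (by linarith)]
        field_simp
    _ = _ := by rw [← exp_add]; norm_num

/-- For every integer `m ≥ 3`,
`(m+1)^((m+1)/2) Γ(m/2) e⁻¹ / (m^(m/2) Γ((m+1)/2))
  ≤ √2 · (m(m+1))^(1/2)/(m−1) · (1 + 1/(m−2))^(−(m−2)/2)`. -/
theorem density_ratio_at_two_le_bound (m : ℕ) (hm : 3 ≤ m) :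
    ((m : ℝ) + 1) ^ (((m : ℝ) + 1) / 2) * Real.Gamma ((m : ℝ) / 2) *
        Real.exp (-1) /
      ((m : ℝ) ^ ((m : ℝ) / 2) * Real.Gamma (((m : ℝ) + 1) / 2)) ≤
    Real.sqrt 2 * ((m : ℝ) * ((m : ℝ) + 1)) ^ ((1 : ℝ) / 2) / ((m : ℝ) - 1) *
      (1 + 1 / ((m : ℝ) - 2)) ^ (-(((m : ℝ) - 2) / 2)) := by
  have ha : (3 : ℝ) ≤ m := by exact_mod_cast hm
  calc _ ≤ √2 * √(m + 1) / √(m - 1) * exp (-(1 / 2)) := add_one_rpow_mul_Gamma_div_le (by linarith)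
    _ = √2 * (√(m - 1) * √(m + 1)) / (m - 1) * exp (-(1 / 2)) := by
        rw [div_eq_mul_one_div _ (√_), ← sqrt_div_self']
        ring
    _ ≤ √2 * (√m * √(m + 1)) / (m - 1) * exp (-(1 / 2)) := by gcongr <;> linarith
    _ = √2 * ((m : ℝ) * (m + 1)) ^ ((1 : ℝ) / 2) / (m - 1) * exp (-(1 / 2)) := by
        rw [← sqrt_eq_rpow, sqrt_mul (by positivity)]
    _ ≤ _ := by
        gcongr
        · exact div_nonneg (by positivity) (by linarith)
        · rw [div_eq_mul_one_div ((m : ℝ) - 2)]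
          exact exp_neg_le_one_add_one_div_rpow_neg_mul (by linarith) (by norm_num)
end

section
/- Define, for integers m ≥ 3, the sequence b_m = √2 · (m(m+1))^{1/2}/(m−1) · (1 + 1/(m−2))^{−(m−2)/2}. Then (b_m) is monotonically decreasing in m, converges to √2·e^{−1/2} as m → ∞, and satisfies b_m < 1 for all m ≥ 12. -/
open Real Filter

noncomputable def Aseq (k : ℕ) : ℝ := (1 + 1 / (k : ℝ)) ^ k

lemma Aseq_pos (k : ℕ) : 0 < Aseq k := by
  unfold Aseq
  positivity

lemma Aseq_mono (k : ℕ) : Aseq k ≤ Aseq (k + 1) := by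
  rcases Nat.eq_zero_or_pos k with hk | hk
  · subst hk
    norm_num [Aseq]
  have hx : (0 : ℝ) < k := by exact_mod_cast hk
  set x : ℝ := (k : ℝ) with hxdef
  have hx1 : (0 : ℝ) < x + 1 := by linarith
  have hb : (-2 : ℝ) ≤ -(1 / (x + 1) ^ 2) := by
    have h1 : (1 : ℝ) ≤ (x + 1) ^ 2 := by nlinarith
    have : 1 / (x + 1) ^ 2 ≤ 1 := by
      rw [div_le_one (by positivity)]; exact h1
    linarith
  have hber := one_add_mul_le_pow hb (k + 1)
  have hL : 1 + ((k : ℕ) + 1 : ℕ) * (-(1 / (x + 1) ^ 2)) = x / (x + 1) := by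
    push_cast
    field_simp
    ring
  have hB : 1 + (-(1 / (x + 1) ^ 2)) = x * (x + 2) / (x + 1) ^ 2 := by
    field_simp
    ring
  rw [hL, hB] at hber
  -- hber : x / (x+1) ≤ (x(x+2)/(x+1)^2)^(k+1)
  have key : ((x + 1) / x) ^ k ≤ ((x + 2) / (x + 1)) ^ (k + 1) := by
    have h1 : ((x + 1) / x) ^ k = x / (x + 1) * ((x + 1) / x) ^ (k + 1) := by
      rw [pow_succ]
      field_simp
    have h2 : x / (x + 1) * ((x + 1) / x) ^ (k + 1)
        ≤ (x * (x + 2) / (x + 1) ^ 2) ^ (k + 1) * ((x + 1) / x) ^ (k + 1) :=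
      mul_le_mul_of_nonneg_right hber (by positivity)
    have h3 : (x * (x + 2) / (x + 1) ^ 2) ^ (k + 1) * ((x + 1) / x) ^ (k + 1)
        = ((x + 2) / (x + 1)) ^ (k + 1) := by
      rw [← mul_pow]
      congr 1
      field_simp
    rw [h1]
    rw [h3] at h2
    exact h2
  have e1 : (1 + 1 / x) = (x + 1) / x := by field_simp
  have e2 : (1 + 1 / ((k : ℝ) + 1)) = (x + 2) / (x + 1) := by
    rw [← hxdef]; field_simp; ring
  unfold Aseq
  push_cast
  rw [← hxdef, e1, e2]
  exact key

lemma key_form (m : ℕ) (hm : 3 ≤ m) :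
    Real.sqrt 2 * ((m : ℝ) * ((m : ℝ) + 1)) ^ ((1 : ℝ) / 2) / ((m : ℝ) - 1) *
      (1 + 1 / ((m : ℝ) - 2)) ^ (-(((m : ℝ) - 2) / 2))
    = Real.sqrt (2 * ((m : ℝ) * ((m : ℝ) + 1)) / (((m : ℝ) - 1) ^ 2 * Aseq (m - 2))) := by
  have hx3 : (3 : ℝ) ≤ (m : ℝ) := by exact_mod_cast hm
  have hc : ((m - 2 : ℕ) : ℝ) = (m : ℝ) - 2 := by
    have : 2 ≤ m := by omega
    push_cast [this]
    ring
  set x : ℝ := (m : ℝ) with hxdef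
  have ht : (0 : ℝ) < 1 + 1 / (x - 2) := by
    have : (0:ℝ) < x - 2 := by linarith
    positivity
  set t : ℝ := 1 + 1 / (x - 2) with htdef
  have hA : Aseq (m - 2) = t ^ (m - 2 : ℕ) := by
    unfold Aseq
    rw [hc]
  have hApos : (0 : ℝ) < Aseq (m - 2) := Aseq_pos _
  -- step A
  have stepA : (x * (x + 1)) ^ ((1 : ℝ) / 2) = Real.sqrt (x * (x + 1)) :=
    (Real.sqrt_eq_rpow _).symm
  -- step B
  have stepB : t ^ (-((x - 2) / 2)) = (Real.sqrt (Aseq (m - 2)))⁻¹ := by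
    have e1 : -((x - 2) / 2) = (x - 2) * (-(1 / 2)) := by ring
    rw [e1, Real.rpow_mul ht.le]
    have e2 : t ^ (x - 2) = Aseq (m - 2) := by
      rw [hA, ← hc, Real.rpow_natCast]
    rw [e2, Real.rpow_neg hApos.le, ← Real.sqrt_eq_rpow]
  rw [stepA, stepB]
  -- step C
  have h1 : (0 : ℝ) < x - 1 := by linarith
  rw [Real.sqrt_div (by positivity) (((x:ℝ) - 1) ^ 2 * Aseq (m - 2)),
    Real.sqrt_mul (by norm_num : (0:ℝ) ≤ 2),
    Real.sqrt_mul (by positivity : (0:ℝ) ≤ (x - 1) ^ 2) (Aseq (m - 2)),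
    Real.sqrt_sq h1.le]
  have hs : (0:ℝ) < Real.sqrt (Aseq (m - 2)) := Real.sqrt_pos.mpr hApos
  field_simp

lemma step_mono (m : ℕ) (hm : 3 ≤ m) :
    Real.sqrt (2 * (((m+1) : ℝ) * (((m+1) : ℝ) + 1)) / ((((m+1) : ℝ) - 1) ^ 2 * Aseq (m + 1 - 2)))
    ≤ Real.sqrt (2 * ((m : ℝ) * ((m : ℝ) + 1)) / (((m : ℝ) - 1) ^ 2 * Aseq (m - 2))) := by
  apply Real.sqrt_le_sqrt
  have hx3 : (3 : ℝ) ≤ (m : ℝ) := by exact_mod_cast hm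
  set x : ℝ := (m : ℝ) with hxdef
  have h21 : m + 1 - 2 = m - 1 := by omega
  rw [h21]
  have hA1 : (0:ℝ) < Aseq (m - 2) := Aseq_pos _
  have hA2 : (0:ℝ) < Aseq (m - 1) := Aseq_pos _
  have hAle : Aseq (m - 2) ≤ Aseq (m - 1) := by
    have h' : m - 1 = (m - 2) + 1 := by omega
    rw [h']
    exact Aseq_mono _
  have hd1 : (0:ℝ) < (((m+1) : ℝ) - 1) ^ 2 * Aseq (m - 1) := by
    have : (0:ℝ) < ((m+1) : ℝ) - 1 := by push_cast; linarith
    positivity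
  have hd2 : (0:ℝ) < (x - 1) ^ 2 * Aseq (m - 2) := by
    have : (0:ℝ) < x - 1 := by linarith
    positivity
  rw [div_le_div_iff₀ hd1 hd2]
  have hpoly : 2 * ((x+1) * (x+2)) * (x-1)^2 ≤ 2 * (x * (x+1)) * x^2 := by nlinarith
  have main : (2 * ((x+1) * (x+2)) * (x-1)^2) * Aseq (m - 2)
      ≤ (2 * (x * (x+1)) * x^2) * Aseq (m - 1) :=
    mul_le_mul hpoly hAle hA1.le (by nlinarith)
  push_cast
  nlinarith [main]

/-- The sequence `b_m = √2 · (m(m+1))^(1/2)/(m−1) · (1 + 1/(m−2))^(−(m−2)/2)`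
is monotonically decreasing for `m ≥ 3`, converges to `√2·e^(−1/2)`, and
satisfies `b_m < 1` for all `m ≥ 12`. -/
theorem bound_seq_decreasing_tendsto_lt_one
    (b : ℕ → ℝ)
    (hb : ∀ m, b m =
      Real.sqrt 2 * ((m : ℝ) * ((m : ℝ) + 1)) ^ ((1 : ℝ) / 2) / ((m : ℝ) - 1) *
        (1 + 1 / ((m : ℝ) - 2)) ^ (-(((m : ℝ) - 2) / 2))) :
    (∀ m n : ℕ, 3 ≤ m → m ≤ n → b n ≤ b m) ∧
    Tendsto b atTop (nhds (Real.sqrt 2 * Real.exp (-(1 : ℝ) / 2))) ∧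
    (∀ m : ℕ, 12 ≤ m → b m < 1) := by
  have hkey : ∀ m : ℕ, 3 ≤ m → b m =
      Real.sqrt (2 * ((m : ℝ) * ((m : ℝ) + 1)) / (((m : ℝ) - 1) ^ 2 * Aseq (m - 2))) := by
    intro m hm
    rw [hb m]
    exact key_form m hm
  have hmono : ∀ m n : ℕ, 3 ≤ m → m ≤ n → b n ≤ b m := by
    intro m n h3 hmn
    induction n, hmn using Nat.le_induction with
    | base => exact le_refl _
    | succ n hn ih =>
      refine le_trans ?_ ih
      have hn3 : 3 ≤ n := le_trans h3 hn
      rw [hkey (n+1) (by omega), hkey n hn3]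
      exact_mod_cast step_mono n hn3
  refine ⟨hmono, ?_, ?_⟩
  · -- limit
    have hA_lim : Tendsto (fun m : ℕ => Aseq (m - 2)) atTop (nhds (Real.exp 1)) := by
      have h := (Real.tendsto_one_add_div_pow_exp 1).comp (tendsto_sub_atTop_nat 2)
      exact h.congr (fun m => by simp [Aseq, Function.comp])
    have h1 : Tendsto (fun m : ℕ => ((m : ℝ) - 1)) atTop atTop := by
      have := tendsto_atTop_add_const_right atTop (-1 : ℝ) tendsto_natCast_atTop_atTop
      exact this.congr (fun m => by ring)
    have h2 : Tendsto (fun m : ℕ => ((m : ℝ) - 1)⁻¹) atTop (nhds 0) :=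
      tendsto_inv_atTop_zero.comp h1
    have h3 : Tendsto
        (fun m : ℕ => 2 * (1 + 3 * ((m : ℝ) - 1)⁻¹ + 2 * (((m : ℝ) - 1)⁻¹ * ((m : ℝ) - 1)⁻¹)))
        atTop (nhds (2 * (1 + 3 * 0 + 2 * (0 * 0)))) := by
      exact (((tendsto_const_nhds.add (h2.const_mul 3)).add ((h2.mul h2).const_mul 2)).const_mul 2)
    have hQ_lim : Tendsto (fun m : ℕ => 2 * ((m : ℝ) * ((m : ℝ) + 1)) / (((m : ℝ) - 1) ^ 2))
        atTop (nhds 2) := by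
      have h3' : Tendsto
          (fun m : ℕ => 2 * (1 + 3 * ((m : ℝ) - 1)⁻¹ + 2 * (((m : ℝ) - 1)⁻¹ * ((m : ℝ) - 1)⁻¹)))
          atTop (nhds 2) := by simpa using h3
      apply h3'.congr'
      filter_upwards [eventually_ge_atTop 2] with m hm
      have hx : ((m : ℝ) - 1) ≠ 0 := by
        have : (2 : ℝ) ≤ (m : ℝ) := by exact_mod_cast hm
        intro h; rw [sub_eq_zero] at h; linarith
      field_simp
      ring
    have hinner : Tendsto (fun m : ℕ =>
        2 * ((m : ℝ) * ((m : ℝ) + 1)) / (((m : ℝ) - 1) ^ 2 * Aseq (m - 2)))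
        atTop (nhds (2 / Real.exp 1)) := by
      have := hQ_lim.div hA_lim (Real.exp_ne_zero 1)
      exact this.congr (fun m => by simp [Pi.div_apply, div_div])
    have hsqrt := hinner.sqrt
    have hval : Real.sqrt (2 / Real.exp 1) = Real.sqrt 2 * Real.exp (-(1:ℝ) / 2) := by
      rw [Real.sqrt_div (by norm_num : (0:ℝ) ≤ 2), ← Real.exp_half,
        show (-1:ℝ)/2 = -(1/2) by norm_num, Real.exp_neg, div_eq_mul_inv]
    rw [hval] at hsqrt
    apply hsqrt.congr'
    filter_upwards [eventually_ge_atTop 3] with m hm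
    exact (hkey m hm).symm
  · intro m hm
    have h12 : b m ≤ b 12 := hmono 12 m (by norm_num) hm
    have hb12 : b 12 < 1 := by
      rw [hkey 12 (by norm_num)]
      rw [show ((12:ℕ) : ℝ) = 12 by norm_num]
      rw [Real.sqrt_lt' one_pos]
      norm_num [Aseq]
    linarith
end
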